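/- Let Γ be a C³ hypersurface with unit normal n and mean curvature κ = Div_Γ n. Then the tangential gradient of the mean curvature satisfies ∇_Γκ = P Δ_Γ n, where P = I − n⊗n and Δ_Γ n is the componentwise Laplace–Beltrami operator applied to n. -/

import Mathlib

/-!
Write `n = ∇b` and `H = Dn` for the Hessian of `b`, a symmetric operator. Differentiating
`|n|² = 1` gives `H n = 0` near `Γ`; hence there `κ = tr (H P) = tr H`, and the tangential
gradient of `z ↦ n(z) · v` is `P (H v) = H v`. So the left side is `tr (DH v)` and the right side
is `tr (DH v) - n · DH v n`. Differentiating `H n = 0` once more gives `DH n n = 0`, and the full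
symmetry of the third derivative `DH` turns `n · DH v n` into `v · DH n n = 0`.
-/

open scoped RealInnerProductSpace

/-- The rank-one operator `u ⊗ v`. -/
noncomputable def rankOne {V : Type*} [NormedAddCommGroup V] [InnerProductSpace ℝ V]
    (u v : V) : V →ₗ[ℝ] V where
  toFun w := ⟪v, w⟫ • u
  map_add' x y := by simp [inner_add_right, add_smul]
  map_smul' c x := by simp [inner_smul_right, mul_smul]

/-- The orthogonal projection `P = I - n ⊗ n` onto the tangent hyperplane. -/
noncomputable def proj {V : Type*} [NormedAddCommGroup V] [InnerProductSpace ℝ V]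
    (n : V) : V →ₗ[ℝ] V :=
  LinearMap.id - rankOne n n

open Filter Topology
open scoped Gradient

section Projection

variable {V : Type*} [NormedAddCommGroup V] [InnerProductSpace ℝ V]

lemma proj_apply (n w : V) : proj n w = w - ⟪n, w⟫ • n := rfl

lemma proj_isSymmetric (n : V) : (proj n).IsSymmetric := by
  intro a c
  simp only [proj_apply, inner_sub_left, inner_sub_right, real_inner_smul_left,
    real_inner_smul_right, real_inner_comm n a]
  ring

lemma proj_apply_of_inner_eq_zero {n w : V} (h : ⟪n, w⟫ = 0) : proj n w = w := by
  rw [proj_apply, h, zero_smul, sub_zero]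

lemma trace_comp_proj [FiniteDimensional ℝ V] (A : V →ₗ[ℝ] V) (n : V) :
    LinearMap.trace ℝ V (A ∘ₗ proj n) = LinearMap.trace ℝ V A - ⟪n, A n⟫ := by
  have h : A ∘ₗ proj n = A - (InnerProductSpace.rankOne ℝ (A n) n : V →L[ℝ] V) := by
    ext w
    simp [proj_apply, map_sub, map_smul]
  rw [h, map_sub, InnerProductSpace.trace_rankOne]

end Projection

lemma inner_fderiv_apply_self_eq_zero {F G : Type*} [NormedAddCommGroup F]
    [InnerProductSpace ℝ F] [NormedAddCommGroup G] [NormedSpace ℝ G] {g : G → F} {y : G} {c : ℝ}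
    (hg : DifferentiableAt ℝ g y) (hc : ∀ᶠ z in 𝓝 y, ‖g z‖ = c) (u : G) :
    ⟪fderiv ℝ g y u, g y⟫ = 0 := by
  have hsq : (fun z => ⟪g z, g z⟫) =ᶠ[𝓝 y] fun _ => c ^ 2 :=
    hc.mono fun z hz => show ⟪g z, g z⟫ = c ^ 2 by rw [real_inner_self_eq_norm_sq, hz]
  have hd := fderiv_inner_apply (𝕜 := ℝ) hg hg u
  rw [hsq.fderiv_eq, fderiv_const_apply, zero_apply, real_inner_comm (fderiv ℝ g y u)] at hd
  linarith

lemma fderiv_trace_apply {F G : Type*} [NormedAddCommGroup F] [NormedSpace ℝ F]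
    [FiniteDimensional ℝ F] [NormedAddCommGroup G] [NormedSpace ℝ G] {A : G → F →L[ℝ] F} {y : G}
    (hA : DifferentiableAt ℝ A y) (u : G) :
    fderiv ℝ (fun z => LinearMap.trace ℝ F (A z)) y u = LinearMap.trace ℝ F (fderiv ℝ A y u) := by
  let T : (F →L[ℝ] F) →L[ℝ] ℝ :=
    (LinearMap.trace ℝ F ∘ₗ ContinuousLinearMap.coeLM ℝ).toContinuousLinearMap
  exact congr($((T.hasFDerivAt.comp y hA.hasFDerivAt).fderiv) u)

lemma fderiv_clm_apply_const {F F' G : Type*} [NormedAddCommGroup F] [NormedSpace ℝ F]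
    [NormedAddCommGroup F'] [NormedSpace ℝ F'] [NormedAddCommGroup G] [NormedSpace ℝ G]
    {A : G → F →L[ℝ] F'} {y : G} (hA : DifferentiableAt ℝ A y) (a : F) (u : G) :
    fderiv ℝ (fun z => A z a) y u = fderiv ℝ A y u a := by
  simp [fderiv_clm_apply hA (differentiableAt_const a)]

section GradientField

variable {E : Type*} [NormedAddCommGroup E] [InnerProductSpace ℝ E] [CompleteSpace E]
  {f : E → ℝ} {x : E}

lemma ContDiff.gradient {n m : WithTop ℕ∞} (hf : ContDiff ℝ n f) (hmn : m + 1 ≤ n) :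
    ContDiff ℝ m (∇ f) :=
  (InnerProductSpace.toDual ℝ E).symm.contDiff.comp (hf.fderiv_right hmn)

lemma ContDiff.differentiable_gradient (hf : ContDiff ℝ 2 f) : Differentiable ℝ (∇ f) :=
  (hf.gradient (m := 1) le_rfl).differentiable one_ne_zero

lemma inner_fderiv_gradient_apply (x u w : E) :
    ⟪fderiv ℝ (∇ f) x u, w⟫ = fderiv ℝ (fderiv ℝ f) x u w := by
  change ⟪fderiv ℝ ((InnerProductSpace.toDual ℝ E).symm ∘ fderiv ℝ f) x u, w⟫ = _
  rw [LinearIsometryEquiv.comp_fderiv]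
  exact InnerProductSpace.toDual_symm_apply

lemma ContDiffAt.isSymmetric_fderiv_gradient (hf : ContDiffAt ℝ 2 f x) :
    (fderiv ℝ (∇ f) x : E →ₗ[ℝ] E).IsSymmetric := by
  intro u w
  rw [ContinuousLinearMap.coe_coe, real_inner_comm _ u, inner_fderiv_gradient_apply,
    inner_fderiv_gradient_apply, hf.isSymmSndFDerivAt (by simp)]

lemma ContDiff.gradient_inner_gradient_const (hf : ContDiff ℝ 2 f) (v x : E) :
    ∇ (fun z => ⟪∇ f z, v⟫) x = fderiv ℝ (∇ f) x v := by
  refine ext_inner_right ℝ fun w => ?_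
  rw [inner_gradient_left,
    fderiv_inner_apply (𝕜 := ℝ) (hf.differentiable_gradient x) (differentiableAt_const v),
    fderiv_const_apply, zero_apply, inner_zero_right, zero_add]
  exact (hf.contDiffAt.isSymmetric_fderiv_gradient w v).trans (real_inner_comm _ _)

lemma ContDiff.fderiv_gradient_apply_gradient_eq_zero (hf : ContDiff ℝ 2 f)
    (hunit : ∀ᶠ z in 𝓝 x, ‖∇ f z‖ = 1) : fderiv ℝ (∇ f) x (∇ f x) = 0 := by
  refine ext_inner_right ℝ fun w => ?_
  rw [inner_zero_left, ← ContinuousLinearMap.coe_coe, hf.contDiffAt.isSymmetric_fderiv_gradient,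
    real_inner_comm]
  exact inner_fderiv_apply_self_eq_zero (hf.differentiable_gradient x) hunit w

lemma ContDiff.differentiable_fderiv_gradient (hf : ContDiff ℝ 3 f) :
    Differentiable ℝ (fderiv ℝ (∇ f)) :=
  ((hf.gradient (m := 2) le_rfl).fderiv_right (m := 1) le_rfl).differentiable one_ne_zero

lemma ContDiff.fderiv_fderiv_gradient_comm (hf : ContDiff ℝ 3 f) (u w : E) :
    fderiv ℝ (fderiv ℝ (∇ f)) x u w = fderiv ℝ (fderiv ℝ (∇ f)) x w u :=
  (hf.gradient (m := 2) le_rfl).contDiffAt.isSymmSndFDerivAt (by simp) u w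

lemma ContDiff.inner_fderiv_fderiv_gradient_comm (hf : ContDiff ℝ 3 f) (u w z : E) :
    ⟪fderiv ℝ (fderiv ℝ (∇ f)) x u w, z⟫ = ⟪fderiv ℝ (fderiv ℝ (∇ f)) x u z, w⟫ := by
  have hH := hf.differentiable_fderiv_gradient
  have hdiff : ∀ a c, fderiv ℝ (fun y => ⟪fderiv ℝ (∇ f) y a, c⟫) x u =
      ⟪fderiv ℝ (fderiv ℝ (∇ f)) x u a, c⟫ := fun a c => by
    rw [fderiv_inner_apply (𝕜 := ℝ) ((hH.clm_apply (differentiable_const a)) x)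
      (differentiableAt_const c), fderiv_const_apply, zero_apply, inner_zero_right, zero_add,
      fderiv_clm_apply_const (hH x)]
  have hsymm : (fun y => ⟪fderiv ℝ (∇ f) y w, z⟫) = fun y => ⟪fderiv ℝ (∇ f) y z, w⟫ :=
    funext fun y => ((hf.of_le (by norm_num)).contDiffAt.isSymmetric_fderiv_gradient
      (x := y) w z).trans (real_inner_comm _ _)
  rw [← hdiff, ← hdiff, hsymm]

lemma ContDiff.proj_gradient_inner_gradient_const (hf : ContDiff ℝ 2 f)
    (hunit : ∀ᶠ z in 𝓝 x, ‖∇ f z‖ = 1) (v : E) :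
    proj (∇ f x) (∇ (fun z => ⟪∇ f z, v⟫) x) = fderiv ℝ (∇ f) x v := by
  rw [hf.gradient_inner_gradient_const]
  refine proj_apply_of_inner_eq_zero ?_
  rw [← ContinuousLinearMap.coe_coe, ← hf.contDiffAt.isSymmetric_fderiv_gradient,
    ContinuousLinearMap.coe_coe, hf.fderiv_gradient_apply_gradient_eq_zero hunit, inner_zero_left]

lemma ContDiff.trace_fderiv_gradient_comp_proj [FiniteDimensional ℝ E] (hf : ContDiff ℝ 2 f)
    (hunit : ∀ᶠ z in 𝓝 x, ‖∇ f z‖ = 1) :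
    LinearMap.trace ℝ E ((fderiv ℝ (∇ f) x : E →ₗ[ℝ] E) ∘ₗ proj (∇ f x)) =
      LinearMap.trace ℝ E (fderiv ℝ (∇ f) x) := by
  rw [trace_comp_proj, ContinuousLinearMap.coe_coe,
    hf.fderiv_gradient_apply_gradient_eq_zero hunit, inner_zero_right, sub_zero]

lemma ContDiff.fderiv_fun_fderiv_gradient_apply (hf : ContDiff ℝ 3 f) (v : E) :
    fderiv ℝ (fun y => fderiv ℝ (∇ f) y v) x = fderiv ℝ (fderiv ℝ (∇ f)) x v := by
  ext w
  rw [fderiv_clm_apply_const (hf.differentiable_fderiv_gradient x),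
    hf.fderiv_fderiv_gradient_comm]

lemma ContDiff.fderiv_fderiv_gradient_apply_gradient_gradient_eq_zero (hf : ContDiff ℝ 3 f)
    (hunit : ∀ᶠ z in 𝓝 x, ‖∇ f z‖ = 1) :
    fderiv ℝ (fderiv ℝ (∇ f)) x (∇ f x) (∇ f x) = 0 := by
  have hf2 : ContDiff ℝ 2 f := hf.of_le (by norm_num)
  have hzero : (fun y => fderiv ℝ (∇ f) y (∇ f y)) =ᶠ[𝓝 x] fun _ => 0 :=
    hunit.eventually_nhds.mono fun y hy => hf2.fderiv_gradient_apply_gradient_eq_zero hy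
  have hd := congr($(fderiv_clm_apply (hf.differentiable_fderiv_gradient x)
    (hf2.differentiable_gradient x)) (∇ f x))
  rw [hzero.fderiv_eq, fderiv_const_apply] at hd
  simpa [hf2.fderiv_gradient_apply_gradient_eq_zero hunit] using hd.symm

lemma ContDiff.inner_gradient_fderiv_fderiv_gradient_apply_gradient_eq_zero
    (hf : ContDiff ℝ 3 f) (hunit : ∀ᶠ z in 𝓝 x, ‖∇ f z‖ = 1) (v : E) :
    ⟪∇ f x, fderiv ℝ (fderiv ℝ (∇ f)) x v (∇ f x)⟫ = 0 := by
  rw [real_inner_comm, hf.fderiv_fderiv_gradient_comm, hf.inner_fderiv_fderiv_gradient_comm,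
    hf.fderiv_fderiv_gradient_apply_gradient_gradient_eq_zero hunit, inner_zero_left]

end GradientField

/-- `Γ` is a level set of `b` with `|∇b| = 1` near `Γ`, so that `n = ∇b`, and
`Δ_Γ g = tr (D(P ∇g) P)`. The identity `∇_Γκ = P Δ_Γ n` is read componentwise:
`(P ∇_Γκ) · e = Δ_Γ n · Pe = Δ_Γ (n · Pe)`, with `Pe` frozen at `x`. -/
theorem tangential_grad_mean_curvature {N : ℕ}
    (b : EuclideanSpace ℝ (Fin N) → ℝ) (hb : ContDiff ℝ 3 b)
    (U : Set (EuclideanSpace ℝ (Fin N))) (hU : IsOpen U)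
    (heik : ∀ y ∈ U, ‖gradient b y‖ = 1)
    (x : EuclideanSpace ℝ (Fin N)) (hx : x ∈ U)
    -- the mean curvature field `κ = Div_Γ n = tr(Dn ∘ P)` with `n = ∇b`
    (K : EuclideanSpace ℝ (Fin N) → ℝ)
    (hK : ∀ y, K y = LinearMap.trace ℝ (EuclideanSpace ℝ (Fin N))
      ((fderiv ℝ (gradient b) y).toLinearMap ∘ₗ proj (gradient b y))) :
    ∀ e, ⟪proj (gradient b x) (gradient K x), e⟫ =
      LinearMap.trace ℝ (EuclideanSpace ℝ (Fin N))
        ((fderiv ℝ (fun y => proj (gradient b y)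
            (gradient (fun z => ⟪gradient b z, proj (gradient b x) e⟫) y)) x).toLinearMap ∘ₗ
          proj (gradient b x)) := by
  intro e
  set v := proj (∇ b x) e
  have hb2 : ContDiff ℝ 2 b := hb.of_le (by norm_num)
  have hunit : ∀ᶠ y in 𝓝 x, ∀ᶠ z in 𝓝 y, ‖∇ b z‖ = 1 :=
    (eventually_of_mem (hU.mem_nhds hx) heik).eventually_nhds
  have hK_eq : K =ᶠ[𝓝 x]
      fun y => LinearMap.trace ℝ (EuclideanSpace ℝ (Fin N)) (fderiv ℝ (∇ b) y) :=
    hunit.mono fun y hy => (hK y).trans (hb2.trace_fderiv_gradient_comp_proj hy)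
  have hfield : (fun y => proj (∇ b y) (∇ (fun z => ⟪∇ b z, v⟫) y)) =ᶠ[𝓝 x]
      fun y => fderiv ℝ (∇ b) y v :=
    hunit.mono fun y hy => hb2.proj_gradient_inner_gradient_const hy v
  calc ⟪proj (∇ b x) (∇ K x), e⟫ = fderiv ℝ K x v := by
        rw [proj_isSymmetric, inner_gradient_left]
    _ = LinearMap.trace ℝ _ (fderiv ℝ (fderiv ℝ (∇ b)) x v) := by
        rw [hK_eq.fderiv_eq, fderiv_trace_apply (hb.differentiable_fderiv_gradient x)]
    _ = _ := by
        rw [hfield.fderiv_eq, hb.fderiv_fun_fderiv_gradient_apply, trace_comp_proj,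
          ContinuousLinearMap.coe_coe,
          hb.inner_gradient_fderiv_fderiv_gradient_apply_gradient_eq_zero hunit.self_of_nhds,
          sub_zero]
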